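/- arXiv:0704.3421 — 2 statements merged into one kernel-verified Lean document; each statement's English description precedes it below -/
import Mathlib

section
/- (Wakamatsu's Lemma) If 𝔅 is closed under extensions and φ: B → M is a surjective 𝔅-cover, then Ext^1_R(X, ker φ) = 0 for all X in 𝔅. -/
open CategoryTheory Opposite TensorProduct

universe u

noncomputable section

/-- `Ext^i_R(M, N) = 0`. -/
def ExtVanishes (R : Type u) [CommRing R] (M N : ModuleCat.{u} R) (i : ℕ) : Prop :=
  Subsingleton (((Ext R (ModuleCat.{u} R) i).obj (op M)).obj N)

/-- `Tor_i^R(M, N) = 0`. -/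
def TorVanishes (R : Type u) [CommRing R] (M N : ModuleCat.{u} R) (i : ℕ) : Prop :=
  Subsingleton (((Tor (ModuleCat.{u} R) i).obj M).obj N)

/-- `φ : B ⟶ M` is a `𝔅`-precover of `M`: `B ∈ 𝔅` and every map from a module in `𝔅`
to `M` factors through `φ`. -/
def IsPrecover (R : Type u) [CommRing R] (𝔅 : Set (ModuleCat.{u} R))
    {B M : ModuleCat.{u} R} (φ : B ⟶ M) : Prop :=
  B ∈ 𝔅 ∧ ∀ X ∈ 𝔅, ∀ g : X ⟶ M, ∃ h : X ⟶ B, h ≫ φ = g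

/-- A `𝔅`-precover `φ` is a `𝔅`-cover if every endomorphism `γ` of its source with
`φ ∘ γ = φ` is an automorphism. -/
def IsCover (R : Type u) [CommRing R] (𝔅 : Set (ModuleCat.{u} R))
    {B M : ModuleCat.{u} R} (φ : B ⟶ M) : Prop :=
  IsPrecover R 𝔅 φ ∧ ∀ γ : B ⟶ B, γ ≫ φ = φ → Function.Bijective γ

/-- `𝔅` is closed under extensions. -/
def ClosedUnderExtensions (R : Type u) [CommRing R] (𝔅 : Set (ModuleCat.{u} R)) : Prop :=
  ∀ (A X C : ModuleCat.{u} R) (f : A ⟶ X) (g : X ⟶ C),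
    Function.Injective f → Function.Surjective g → LinearMap.range f.hom = LinearMap.ker g.hom →
    A ∈ 𝔅 → C ∈ 𝔅 → X ∈ 𝔅

/-!
`Ext¹(X, K)` vanishes as soon as every map `ker π → K` extends along `ker π ⊆ P`, for a
surjection `π : P → X` from a projective. For `K = ker φ` and `f : ker π → K`, the pushout `Y`
of `B ← ker π ↪ P` is an extension of `X` by `B`, hence lies in `𝔅`. The map `Y → M` induced by
`φ` and `0` factors through the cover, and minimality of the cover turns the composite `B → Y → B`
into an automorphism, so `B ↪ Y` has a retraction over `M`; restricted to `P` it extends `f`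
and takes values in `ker φ`.
-/

section Pushout

variable {R : Type*} [CommRing R] {B P M : Type*} [AddCommGroup B] [Module R B]
  [AddCommGroup P] [Module R P] [AddCommGroup M] [Module R M] {Ω : Submodule R P}
  (g : Ω →ₗ[R] B)

abbrev ModulePushout : Type _ := (B × P) ⧸ LinearMap.range (g.prod (-Ω.subtype))

namespace ModulePushout

def inl : B →ₗ[R] ModulePushout g := (LinearMap.range _).mkQ ∘ₗ LinearMap.inl R B P

def inr : P →ₗ[R] ModulePushout g := (LinearMap.range _).mkQ ∘ₗ LinearMap.inr R B P

theorem inr_coe (ω : Ω) : inr g ω = inl g (g ω) := by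
  refine (Submodule.Quotient.eq _).2 ⟨-ω, ?_⟩
  simp

theorem inl_injective : Function.Injective (inl g) := by
  refine (injective_iff_map_eq_zero _).2 fun b hb => ?_
  obtain ⟨ω, hω⟩ := (Submodule.Quotient.mk_eq_zero _).1 hb
  obtain rfl : ω = 0 := by simpa using congrArg Prod.snd hω
  simpa using (congrArg Prod.fst hω).symm

theorem exists_inl_add_inr_eq (y : ModulePushout g) : ∃ b p, inl g b + inr g p = y := by
  obtain ⟨⟨b, p⟩, rfl⟩ := Submodule.mkQ_surjective _ y
  exact ⟨b, p, by simp [inl, inr, ← Submodule.Quotient.mk_add]⟩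

variable {g}

def desc (α : B →ₗ[R] M) (β : P →ₗ[R] M) (h : ∀ ω, α (g ω) = β ω) : ModulePushout g →ₗ[R] M :=
  (LinearMap.range _).liftQ (α.coprod β) <| by
    rintro _ ⟨ω, rfl⟩
    simp [h]

@[simp]
theorem desc_inl (α : B →ₗ[R] M) (β : P →ₗ[R] M) (h : ∀ ω, α (g ω) = β ω) (b : B) :
    desc α β h (inl g b) = α b := by
  simp [desc, inl]

@[simp]
theorem desc_inr (α : B →ₗ[R] M) (β : P →ₗ[R] M) (h : ∀ ω, α (g ω) = β ω) (p : P) :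
    desc α β h (inr g p) = β p := by
  simp [desc, inr]

theorem range_inl_eq_ker_desc_zero {π : P →ₗ[R] M} (h : ∀ ω, (0 : B →ₗ[R] M) (g ω) = π ω)
    (hπ : LinearMap.ker π ≤ Ω) : LinearMap.range (inl g) = LinearMap.ker (desc 0 π h) := by
  refine le_antisymm (LinearMap.range_le_ker_iff.2 (LinearMap.ext fun b => by simp)) fun y hy => ?_
  obtain ⟨b, p, rfl⟩ := exists_inl_add_inr_eq g y
  have hp : p ∈ Ω := hπ (by simpa using hy)
  exact ⟨b + g ⟨p, hp⟩, by rw [map_add, ← inr_coe]⟩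

end ModulePushout

end Pushout

namespace IsCover

variable {R : Type u} [CommRing R] {𝔅 : Set (ModuleCat.{u} R)} {B M : ModuleCat.{u} R}
  {φ : B ⟶ M}

theorem exists_retraction (hφ : IsCover R 𝔅 φ) {Y : ModuleCat.{u} R} (hY : Y ∈ 𝔅)
    (j : B ⟶ Y) (ψ : Y ⟶ M) (hjψ : j ≫ ψ = φ) : ∃ r : Y ⟶ B, j ≫ r = 𝟙 B ∧ r ≫ φ = ψ := by
  obtain ⟨h, hhφ⟩ := hφ.1.2 Y hY ψ
  have hγφ : (j ≫ h) ≫ φ = φ := by rw [Category.assoc, hhφ, hjψ]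
  have : IsIso (j ≫ h) := (ConcreteCategory.isIso_iff_bijective _).2 (hφ.2 _ hγφ)
  have hγ'φ : inv (j ≫ h) ≫ φ = φ := by rw [IsIso.inv_comp_eq, hγφ]
  refine ⟨h ≫ inv (j ≫ h), by rw [← Category.assoc, IsIso.hom_inv_id], ?_⟩
  rw [Category.assoc, hγ'φ, hhφ]

theorem exists_extension (hφ : IsCover R 𝔅 φ) (hext : ClosedUnderExtensions R 𝔅)
    {X P : ModuleCat.{u} R} (hX : X ∈ 𝔅) (π : P ⟶ X) (hπ : Function.Surjective π)
    (f : LinearMap.ker π.hom →ₗ[R] LinearMap.ker φ.hom) :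
    ∃ v : P →ₗ[R] LinearMap.ker φ.hom, ∀ ω : LinearMap.ker π.hom, v ω = f ω := by
  let g := (LinearMap.ker φ.hom).subtype ∘ₗ f
  let Y := ModuleCat.of R (ModulePushout g)
  have hq : ∀ ω, (0 : B →ₗ[R] X) (g ω) = π.hom ω := fun ω => ω.2.symm
  have hY : Y ∈ 𝔅 := by
    refine hext B Y X (ModuleCat.ofHom (ModulePushout.inl g))
      (ModuleCat.ofHom (ModulePushout.desc 0 π.hom hq)) (ModulePushout.inl_injective g) ?_
      (ModulePushout.range_inl_eq_ker_desc_zero hq le_rfl) hφ.1.1 hX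
    intro x
    obtain ⟨p, rfl⟩ := hπ x
    exact ⟨ModulePushout.inr g p, ModulePushout.desc_inr _ _ hq p⟩
  have hψ : ∀ ω, φ.hom (g ω) = (0 : P →ₗ[R] M) ω := fun ω => (f ω).2
  obtain ⟨r, hjr, hrφ⟩ := hφ.exists_retraction hY (ModuleCat.ofHom (ModulePushout.inl g))
    (ModuleCat.ofHom (ModulePushout.desc φ.hom 0 hψ))
    (by ext b; exact ModulePushout.desc_inl _ _ hψ b)
  have hρ : ∀ p, r (ModulePushout.inr g p) ∈ LinearMap.ker φ.hom := fun p => by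
    simpa using congr($hrφ (ModulePushout.inr g p))
  refine ⟨LinearMap.codRestrict _ (r.hom ∘ₗ ModulePushout.inr g) hρ, fun ω => Subtype.ext ?_⟩
  simp only [LinearMap.codRestrict_apply, LinearMap.comp_apply]
  rw [ModulePushout.inr_coe]
  exact congr($hjr (g ω))

end IsCover

section HomExactness

variable {R : Type*} [CommRing R] {P₂ P₁ P₀ X N : Type*} [AddCommGroup P₂] [Module R P₂]
  [AddCommGroup P₁] [Module R P₁] [AddCommGroup P₀] [Module R P₀] [AddCommGroup X] [Module R X]
  [AddCommGroup N] [Module R N]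

theorem exists_comp_eq_of_forall_extend {d₂ : P₂ →ₗ[R] P₁} {d₁ : P₁ →ₗ[R] P₀} {π : P₀ →ₗ[R] X}
    (h₁ : LinearMap.range d₂ = LinearMap.ker d₁) (h₀ : LinearMap.range d₁ = LinearMap.ker π)
    (hN : ∀ f : LinearMap.ker π →ₗ[R] N, ∃ v : P₀ →ₗ[R] N, ∀ ω : LinearMap.ker π, v ω = f ω)
    (u : P₁ →ₗ[R] N) (hu : u ∘ₗ d₂ = 0) : ∃ v : P₀ →ₗ[R] N, v ∘ₗ d₁ = u := by
  let d₁' : P₁ →ₗ[R] LinearMap.ker π := d₁.codRestrict _ fun p => h₀ ▸ d₁.mem_range_self p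
  have hd₁' : Function.Surjective d₁' := by
    rintro ⟨x, hx⟩
    obtain ⟨p, rfl⟩ := (h₀ ▸ hx : x ∈ LinearMap.range d₁)
    exact ⟨p, rfl⟩
  have hker : LinearMap.ker d₁' ≤ LinearMap.ker u := by
    rw [LinearMap.ker_codRestrict, ← h₁, LinearMap.range_le_ker_iff, hu]
  obtain ⟨v, hv⟩ := hN ((LinearMap.ker d₁').liftQ u hker ∘ₗ
    (d₁'.quotKerEquivOfSurjective hd₁').symm.toLinearMap)
  refine ⟨v, LinearMap.ext fun p => ?_⟩
  simpa [d₁'] using hv (d₁' p)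

end HomExactness

theorem extVanishes_one_of_forall_extend {R : Type u} [CommRing R] {X N : ModuleCat.{u} R}
    (hN : ∀ (P : ModuleCat.{u} R) [Projective P] (π : P ⟶ X), Function.Surjective π →
      ∀ f : LinearMap.ker π.hom →ₗ[R] N, ∃ v : P →ₗ[R] N, ∀ ω : LinearMap.ker π.hom, v ω = f ω) :
    ExtVanishes R X N 1 := by
  let P : ProjectiveResolution X := (HasProjectiveResolution.out (Z := X)).some
  have hexact : (P.complex.linearYonedaObj R N).ExactAt 1 := by
    rw [HomologicalComplex.exactAt_iff' _ 0 1 2 (by simp) (by simp),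
      ShortComplex.moduleCat_exact_iff]
    intro u hu
    have h₀ := (ShortComplex.moduleCat_exact_iff_range_eq_ker _).1 P.exact₀
    have h₁ := (ShortComplex.moduleCat_exact_iff_range_eq_ker _).1 (P.exact_succ 0)
    have hπ : Function.Surjective (P.π.f 0) :=
      (ModuleCat.epi_iff_surjective (P.π.f 0)).1 inferInstance
    obtain ⟨v, hv⟩ := exists_comp_eq_of_forall_extend h₁ h₀ (hN _ _ hπ) u.hom congr(($hu).hom)
    exact ⟨ModuleCat.ofHom v, ModuleCat.hom_ext hv⟩
  exact ModuleCat.subsingleton_of_isZero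
    (((HomologicalComplex.exactAt_iff_isZero_homology _ _).1 hexact).of_iso (P.isoExt 1 N))

theorem wakamatsu_general
    (R : Type u) [CommRing R]
    (𝔅 : Set (ModuleCat.{u} R))
    (hext : ClosedUnderExtensions R 𝔅)
    {B M : ModuleCat.{u} R} (φ : B ⟶ M)
    (hcov : IsCover R 𝔅 φ) :
    ∀ X ∈ 𝔅, ExtVanishes R X (ModuleCat.of R ↥(LinearMap.ker φ.hom)) 1 := fun _ hX =>
  extVanishes_one_of_forall_extend fun _ _ π hπ => hcov.exists_extension hext hX π hπ

/-- Wakamatsu's lemma: if `𝔅` is closed under extensions and `φ : B ⟶ M` is a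
surjective `𝔅`-cover, then `Ext¹(X, ker φ) = 0` for every `X ∈ 𝔅`. -/
theorem wakamatsu
    (R : Type u) [CommRing R] [IsNoetherianRing R]
    (𝔅 : Set (ModuleCat.{u} R)) (hfg : ∀ B ∈ 𝔅, Module.Finite R B)
    (hext : ClosedUnderExtensions R 𝔅)
    {B M : ModuleCat.{u} R} (φ : B ⟶ M) (hsurj : Function.Surjective φ)
    (hcov : IsCover R 𝔅 φ) :
    ∀ X ∈ 𝔅, ExtVanishes R X (ModuleCat.of R ↥(LinearMap.ker φ.hom)) 1 :=
  wakamatsu_general R 𝔅 hext φ hcov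
end
end

section
/- Suppose M has a 𝔅-cover. Then a 𝔅-precover φ: X → M is a 𝔅-cover if and only if ker φ contains no non-zero direct summand of X. -/
open CategoryTheory Opposite TensorProduct

universe u

noncomputable section

/-!
Let `ψ : Y → M` be a cover and `φ : X → M` a precover, with maps `f : X → Y` and `g : Y → X`
over `M`. Then `f ∘ g` is an automorphism `α` of `Y`, and `e = g ∘ α⁻¹ ∘ f` is an idempotent
endomorphism of `X` over `M`, whose kernel is a direct summand of `X` inside `ker φ`. If `ker φ`
contains no nonzero summand then `e = id`, so `g` is an isomorphism over `M` and `φ` inherits the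
cover property from `ψ`. Conversely, if `φ` is a cover and `X = Z ⊕ W` with `Z ≤ ker φ`, the
projection onto `W` along `Z` is an endomorphism over `M`, hence injective, so `Z = 0`.
-/

namespace LinearMap

variable {R X M : Type*} [Ring R] [AddCommGroup X] [Module R X] [AddCommGroup M] [Module R M]

theorem eq_one_of_isIdempotentElem_of_comp_eq {φ : X →ₗ[R] M}
    (hker : ∀ Z : Submodule R X, Z ≤ ker φ → (∃ W, IsCompl Z W) → Z = ⊥)
    {e : Module.End R X} (he : IsIdempotentElem e) (hφe : φ ∘ₗ e = φ) : e = 1 := by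
  have hker_e : ker e = ⊥ :=
    hker _ (fun x hx => by rw [mem_ker] at hx ⊢; rw [← hφe, comp_apply, hx, map_zero])
      ⟨_, (IsIdempotentElem.isCompl he).symm⟩
  exact LinearMap.ext fun x => ker_eq_bot.mp hker_e (LinearMap.congr_fun he x)

end LinearMap

section Covers

variable {R : Type u} [CommRing R] {𝔅 : Set (ModuleCat.{u} R)} {M X Y : ModuleCat.{u} R}

theorem IsCover.isIso_of_comp_eq {ψ : Y ⟶ M} (hψ : IsCover R 𝔅 ψ) (γ : Y ⟶ Y)
    (hγ : γ ≫ ψ = ψ) : IsIso γ :=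
  (ConcreteCategory.isIso_iff_bijective γ).mpr (hψ.2 γ hγ)

theorem IsCover.eq_bot_of_le_ker_of_isCompl {φ : X ⟶ M} (hφ : IsCover R 𝔅 φ)
    {Z W : Submodule R X} (hZ : Z ≤ LinearMap.ker φ.hom) (hZW : IsCompl Z W) : Z = ⊥ := by
  let γ : X ⟶ X := ModuleCat.ofHom (W.projection Z hZW.symm)
  have hγφ : γ ≫ φ = φ := by
    ext x
    have hx := hZ (Submodule.sub_projection_mem hZW.symm x)
    rw [LinearMap.mem_ker, map_sub, sub_eq_zero] at hx
    exact hx.symm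
  have hγ : LinearMap.ker γ.hom = ⊥ := LinearMap.ker_eq_bot.mpr (hφ.2 γ hγφ).1
  rwa [ModuleCat.hom_ofHom, Submodule.ker_projection] at hγ

theorem IsCover.of_iso {ψ : Y ⟶ M} {φ : X ⟶ M} (hψ : IsCover R 𝔅 ψ) (hφ : IsPrecover R 𝔅 φ)
    (g : Y ⟶ X) [IsIso g] (hg : g ≫ φ = ψ) : IsCover R 𝔅 φ := by
  refine ⟨hφ, fun u hu => ?_⟩
  have : IsIso (g ≫ u ≫ inv g) :=
    hψ.isIso_of_comp_eq _ (by rw [← hg]; simp [hu])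
  have : IsIso u := by simpa using (inferInstance : IsIso (inv g ≫ (g ≫ u ≫ inv g) ≫ g))
  exact ConcreteCategory.bijective_of_isIso u

theorem IsPrecover.exists_isIso_of_isCover {φ : X ⟶ M} {ψ : Y ⟶ M} (hφ : IsPrecover R 𝔅 φ)
    (hψ : IsCover R 𝔅 ψ)
    (hker : ∀ Z : Submodule R X, Z ≤ LinearMap.ker φ.hom → (∃ W, IsCompl Z W) → Z = ⊥) :
    ∃ g : Y ⟶ X, IsIso g ∧ g ≫ φ = ψ := by
  obtain ⟨f, hf⟩ := hψ.1.2 X hφ.1 φ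
  obtain ⟨g, hg⟩ := hφ.2 Y hψ.1.1 ψ
  have : IsIso (g ≫ f) := hψ.isIso_of_comp_eq _ (by rw [Category.assoc, hf, hg])
  have hα : g ≫ f ≫ inv (g ≫ f) = 𝟙 Y := by rw [← Category.assoc, IsIso.hom_inv_id]
  have hinv : inv (g ≫ f) ≫ ψ = ψ := by rw [IsIso.inv_comp_eq, Category.assoc, hf, hg]
  have he : f ≫ inv (g ≫ f) ≫ g = 𝟙 X := by
    refine ModuleCat.hom_ext (LinearMap.eq_one_of_isIdempotentElem_of_comp_eq hker ?_ ?_)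
    · rw [IsIdempotentElem, Module.End.mul_eq_comp, ← ModuleCat.hom_comp]
      simp only [Category.assoc, reassoc_of% hα]
    · rw [← ModuleCat.hom_comp, Category.assoc, Category.assoc, hg, hinv, hf]
  exact ⟨g, ⟨⟨f ≫ inv (g ≫ f), hα, (Category.assoc _ _ _).trans he⟩⟩, hg⟩

end Covers

/-- Suppose `M` has a `𝔅`-cover. Then a `𝔅`-precover `φ : X ⟶ M` is a `𝔅`-cover if
and only if `ker φ` contains no non-zero direct summand of `X`. -/
theorem cover_iff_ker_no_summand
    (R : Type u) [CommRing R] (𝔅 : Set (ModuleCat.{u} R))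
    {M X : ModuleCat.{u} R}
    (hcov : ∃ (Y : ModuleCat.{u} R) (ψ : Y ⟶ M), IsCover R 𝔅 ψ)
    (φ : X ⟶ M) (hpre : IsPrecover R 𝔅 φ) :
    IsCover R 𝔅 φ ↔
      ∀ Z : Submodule R X, Z ≤ LinearMap.ker φ.hom → (∃ W, IsCompl Z W) → Z = ⊥ := by
  refine ⟨fun hφ Z hZ ⟨W, hZW⟩ => hφ.eq_bot_of_le_ker_of_isCompl hZ hZW, fun hker => ?_⟩
  obtain ⟨Y, ψ, hψ⟩ := hcov
  obtain ⟨g, _, hg⟩ := hpre.exists_isIso_of_isCover hψ hker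
  exact hψ.of_iso hpre g hg
end
end
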